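/- Let y, z be smooth solutions on ℝ⁴ (sufficiently decaying) of ∂_t y = i(Δ + b₁·∇ + c₁)y + 2iz\overline{y} and ∂_t z = i((1/2)Δ + b₂·∇ + c₂)z + iy², where b₁ = 2∇W, b₂ = ∇W̃, c₁ = Σ_j(∂_jW)² + ΔW, c₂ = (1/2)Σ_j(∂_jW̃)² + (1/2)ΔW̃, with W = iΦ, W̃ = 2W, and Φ = Σ_k φ_k B_k real-valued. Then the mass M(y(t),z(t)) = ‖y(t)‖²_{L²} + 2‖z(t)‖²_{L²} is constant in time. -/

import Mathlib

open MeasureTheory Complex Filter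

noncomputable section

abbrev V : Type := Fin 4 → ℝ

def pd (j : Fin 4) (f : V → ℂ) (x : V) : ℂ := fderiv ℝ f x (Pi.single j 1)
def pdR (j : Fin 4) (f : V → ℝ) (x : V) : ℝ := fderiv ℝ f x (Pi.single j 1)
def lap (f : V → ℂ) (x : V) : ℂ := ∑ j, pd j (pd j f) x
def lapR (f : V → ℝ) (x : V) : ℝ := ∑ j, pdR j (pdR j f) x
def gradSq (f : V → ℂ) (x : V) : ℝ := ∑ j, ‖pd j f x‖ ^ 2
def H1 (f : V → ℂ) : Prop :=
  Differentiable ℝ f ∧ MemLp f 2 volume ∧ ∀ j, MemLp (pd j f) 2 volume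
def Mq (f g : V → ℂ) : ℝ := (∫ x, ‖f x‖ ^ 2) + 2 * ∫ x, ‖g x‖ ^ 2
def Kq (f g : V → ℂ) : ℝ := (∫ x, gradSq f x) + (1 / 2) * ∫ x, gradSq g x
def Pq (f g : V → ℂ) : ℝ := (∫ x, g x * (starRingEnd ℂ) (f x ^ 2)).re

lemma contDiff_pd {f : V → ℂ} (hf : ContDiff ℝ (⊤ : ℕ∞) f) (j : Fin 4) : ContDiff ℝ (⊤ : ℕ∞) (pd j f) :=
  (hf.fderiv_right (le_of_eq (by simp))).clm_apply contDiff_const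
lemma contDiff_pdR {f : V → ℝ} (hf : ContDiff ℝ (⊤ : ℕ∞) f) (j : Fin 4) : ContDiff ℝ (⊤ : ℕ∞) (pdR j f) :=
  (hf.fderiv_right (le_of_eq (by simp))).clm_apply contDiff_const

lemma pd_mul {f g : V → ℂ} {x : V} (hf : DifferentiableAt ℝ f x) (hg : DifferentiableAt ℝ g x)
    (j : Fin 4) : pd j (fun x => f x * g x) x = f x * pd j g x + g x * pd j f x := by
  simp [pd, fderiv_fun_mul hf hg, smul_eq_mul]
lemma pd_conj {f : V → ℂ} {x : V} (hf : DifferentiableAt ℝ f x) (j : Fin 4) :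
    pd j (fun x => (starRingEnd ℂ) (f x)) x = (starRingEnd ℂ) (pd j f x) := by
  have : fderiv ℝ (fun x => (starRingEnd ℂ) (f x)) x
      = (Complex.conjCLE.toContinuousLinearMap).comp (fderiv ℝ f x) :=
    (Complex.conjCLE.toContinuousLinearMap.hasFDerivAt.comp x hf.hasFDerivAt).fderiv
  simp [pd, this]
lemma pd_ofReal {u : V → ℝ} {x : V} (hu : DifferentiableAt ℝ u x) (j : Fin 4) :
    pd j (fun x => ((u x : ℂ))) x = ((pdR j u x : ℂ)) := by
  have : fderiv ℝ (fun x => ((u x : ℂ))) x = Complex.ofRealCLM.comp (fderiv ℝ u x) :=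
    (Complex.ofRealCLM.hasFDerivAt.comp x hu.hasFDerivAt).fderiv
  simp [pd, pdR, this]
lemma pdR_re {H : V → ℂ} {x : V} (hH : DifferentiableAt ℝ H x) (j : Fin 4) :
    pdR j (fun x => (H x).re) x = (pd j H x).re := by
  have : fderiv ℝ (fun x => (H x).re) x = Complex.reCLM.comp (fderiv ℝ H x) :=
    (Complex.reCLM.hasFDerivAt.comp x hH.hasFDerivAt).fderiv
  simp [pd, pdR, this]
lemma pd_add {f g : V → ℂ} {x : V} (hf : DifferentiableAt ℝ f x) (hg : DifferentiableAt ℝ g x)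
    (j : Fin 4) : pd j (fun x => f x + g x) x = pd j f x + pd j g x := by
  simp [pd, fderiv_fun_add hf hg]
lemma pd_sub {f g : V → ℂ} {x : V} (hf : DifferentiableAt ℝ f x) (hg : DifferentiableAt ℝ g x)
    (j : Fin 4) : pd j (fun x => f x - g x) x = pd j f x - pd j g x := by
  simp [pd, fderiv_fun_sub hf hg]
lemma pd_const_mul {f : V → ℂ} {x : V} (hf : DifferentiableAt ℝ f x) (c : ℂ) (j : Fin 4) :
    pd j (fun x => c * f x) x = c * pd j f x := by
  simp [pd, fderiv_const_mul hf c, smul_eq_mul]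

lemma pd_Hc {Y Z : V → ℂ} {P : V → ℝ} (hY : ContDiff ℝ (⊤ : ℕ∞) Y) (hZ : ContDiff ℝ (⊤ : ℕ∞) Z)
    (hP : ContDiff ℝ (⊤ : ℕ∞) P) (j : Fin 4) (x : V) :
    pd j (fun x => 2*I*((starRingEnd ℂ) (Y x) * pd j Y x)
      - 2*(((pdR j P x : ℝ):ℂ) * ((starRingEnd ℂ) (Y x) * Y x))
      + (2*I*((starRingEnd ℂ) (Z x) * pd j Z x)
      - 4*(((pdR j P x : ℝ):ℂ) * ((starRingEnd ℂ) (Z x) * Z x)))) x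
    = 2*I*((starRingEnd ℂ) (pd j Y x) * pd j Y x + (starRingEnd ℂ) (Y x) * pd j (pd j Y) x)
      - 2*(((pdR j (pdR j P) x : ℝ):ℂ) * ((starRingEnd ℂ) (Y x) * Y x))
      - 2*(((pdR j P x : ℝ):ℂ) * ((starRingEnd ℂ) (pd j Y x) * Y x
          + (starRingEnd ℂ) (Y x) * pd j Y x))
      + (2*I*((starRingEnd ℂ) (pd j Z x) * pd j Z x + (starRingEnd ℂ) (Z x) * pd j (pd j Z) x)
      - 4*(((pdR j (pdR j P) x : ℝ):ℂ) * ((starRingEnd ℂ) (Z x) * Z x))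
      - 4*(((pdR j P x : ℝ):ℂ) * ((starRingEnd ℂ) (pd j Z x) * Z x
          + (starRingEnd ℂ) (Z x) * pd j Z x))) := by
  have hYd : DifferentiableAt ℝ Y x := (hY.differentiable (by simp)) x
  have hZd : DifferentiableAt ℝ Z x := (hZ.differentiable (by simp)) x
  have hYs : DifferentiableAt ℝ (fun x => (starRingEnd ℂ) (Y x)) x := hYd.star
  have hZs : DifferentiableAt ℝ (fun x => (starRingEnd ℂ) (Z x)) x := hZd.star
  have hY1 : DifferentiableAt ℝ (pd j Y) x := ((contDiff_pd hY j).differentiable (by simp)) x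
  have hZ1 : DifferentiableAt ℝ (pd j Z) x := ((contDiff_pd hZ j).differentiable (by simp)) x
  have hPd : DifferentiableAt ℝ (pdR j P) x := ((contDiff_pdR hP j).differentiable (by simp)) x
  have hPc : DifferentiableAt ℝ (fun x => ((pdR j P x : ℝ):ℂ)) x :=
    Complex.ofRealCLM.differentiableAt.comp x hPd
  have hT1 : DifferentiableAt ℝ (fun x => (starRingEnd ℂ) (Y x) * pd j Y x) x := hYs.mul hY1
  have hT2 : DifferentiableAt ℝ (fun x => (starRingEnd ℂ) (Y x) * Y x) x := hYs.mul hYd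
  have hT3 : DifferentiableAt ℝ (fun x => (starRingEnd ℂ) (Z x) * pd j Z x) x := hZs.mul hZ1
  have hT4 : DifferentiableAt ℝ (fun x => (starRingEnd ℂ) (Z x) * Z x) x := hZs.mul hZd
  rw [pd_add (((differentiableAt_const _).fun_mul hT1).fun_sub
        ((differentiableAt_const _).fun_mul (hPc.fun_mul hT2)))
      (((differentiableAt_const _).fun_mul hT3).fun_sub
        ((differentiableAt_const _).fun_mul (hPc.fun_mul hT4))),
    pd_sub ((differentiableAt_const _).fun_mul hT1) ((differentiableAt_const _).fun_mul (hPc.fun_mul hT2)),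
    pd_sub ((differentiableAt_const _).fun_mul hT3) ((differentiableAt_const _).fun_mul (hPc.fun_mul hT4)),
    pd_const_mul hT1, pd_const_mul (hPc.fun_mul hT2), pd_const_mul hT3, pd_const_mul (hPc.fun_mul hT4),
    pd_mul hPc hT2, pd_mul hPc hT4,
    pd_mul hYs hY1, pd_mul hYs hYd, pd_mul hZs hZ1, pd_mul hZs hZd,
    pd_conj hYd, pd_conj hZd, pd_ofReal hPd]
  ring


lemma hasDerivAt_slice (w : ℝ → V → ℂ) (hw : ContDiff ℝ (⊤ : ℕ∞) (fun p : ℝ × V => w p.1 p.2))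
    (σ : ℝ) (x : V) :
    HasDerivAt (fun σ' => w σ' x)
      (fderiv ℝ (fun p : ℝ × V => w p.1 p.2) (σ, x) ((1:ℝ), (0:V))) σ := by
  have h := ((hw.differentiable (by simp)) (σ, x)).hasFDerivAt.comp_hasDerivAt σ
    ((hasDerivAt_id σ).prodMk (hasDerivAt_const σ x))
  exact h

lemma hasDerivAt_normSq' {f : ℝ → ℂ} {d : ℂ} {t : ℝ} (h : HasDerivAt f d t) :
    HasDerivAt (fun s => ‖f s‖ ^ 2) (2 * ((starRingEnd ℂ) (f t) * d).re) t := by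
  have hre : HasDerivAt (fun s => (f s).re) d.re t :=
    Complex.reCLM.hasFDerivAt.comp_hasDerivAt t h
  have him : HasDerivAt (fun s => (f s).im) d.im t :=
    Complex.imCLM.hasFDerivAt.comp_hasDerivAt t h
  have h2 : HasDerivAt (fun s => (f s).re ^ 2 + (f s).im ^ 2)
      (2 * (f t).re ^ 1 * d.re + 2 * (f t).im ^ 1 * d.im) t := by
    simpa using (hre.fun_pow 2).fun_add (him.fun_pow 2)
  have hfun : (fun s => ‖f s‖ ^ 2) = fun s => (f s).re ^ 2 + (f s).im ^ 2 := by
    funext s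
    rw [Complex.sq_norm, Complex.normSq_apply]; ring
  rw [hfun]
  convert h2 using 1
  simp [Complex.mul_re]; ring

lemma hasDerivAt_mass (w : ℝ → V → ℂ) (hw : ContDiff ℝ (⊤ : ℕ∞) (fun p : ℝ × V => w p.1 p.2))
    (K : Set V) (hK : IsCompact K) (hsupp : ∀ t, Function.support (w t) ⊆ K) (t : ℝ) :
    Integrable (fun x => 2 * ((starRingEnd ℂ) (w t x) *
        fderiv ℝ (fun p : ℝ × V => w p.1 p.2) (t, x) ((1:ℝ), (0:V))).re) volume ∧
    HasDerivAt (fun σ => ∫ x, ‖w σ x‖ ^ 2)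
      (∫ x, 2 * ((starRingEnd ℂ) (w t x) *
        fderiv ℝ (fun p : ℝ × V => w p.1 p.2) (t, x) ((1:ℝ), (0:V))).re) t := by
  set uw : ℝ × V → ℂ := fun p => w p.1 p.2 with huw
  have hw0 : ∀ σ x, x ∉ K → w σ x = 0 := fun σ x hx =>
    Function.notMem_support.1 (fun h => hx (hsupp σ h))
  -- continuity of the derivative integrand, jointly
  have hW'c : Continuous (fun p : ℝ × V =>
      2 * ((starRingEnd ℂ) (uw p) * fderiv ℝ uw p ((1:ℝ), (0:V))).re) := by
    have h1 : Continuous fun p : ℝ × V => fderiv ℝ uw p ((1:ℝ), (0:V)) :=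
      (((hw.fderiv_right (m := (⊤ : ℕ∞)) (le_of_eq (by simp))).clm_apply contDiff_const).continuous)
    have h2 : Continuous fun p : ℝ × V => (starRingEnd ℂ) (uw p) :=
      Complex.conjCLE.toContinuousLinearMap.continuous.comp hw.continuous
    exact continuous_const.mul (Complex.continuous_re.comp (h2.mul h1))
  obtain ⟨C, hC⟩ := (isCompact_Icc.prod hK).exists_bound_of_continuousOn
    (s := Set.Icc (t-1) (t+1) ×ˢ K) hW'c.continuousOn
  have hcont : ∀ σ, Continuous (fun x : V => ‖w σ x‖ ^ 2) := fun σ => by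
    exact (hw.continuous.comp (Continuous.prodMk_right σ)).norm.pow 2
  have hcont' : ∀ σ, Continuous (fun x : V =>
      2 * ((starRingEnd ℂ) (w σ x) * fderiv ℝ uw (σ, x) ((1:ℝ), (0:V))).re) := fun σ => by
    exact hW'c.comp (Continuous.prodMk_right σ)
  refine (hasDerivAt_integral_of_dominated_loc_of_deriv_le
    (F := fun σ (x : V) => ‖w σ x‖ ^ 2)
    (F' := fun σ (x : V) => 2 * ((starRingEnd ℂ) (w σ x) * fderiv ℝ uw (σ, x) ((1:ℝ), (0:V))).re)
    (bound := K.indicator (fun _ => C)) (s := Metric.ball t 1) (Metric.ball_mem_nhds t one_pos)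
    (Filter.Eventually.of_forall (fun σ => (hcont σ).aestronglyMeasurable))
    ?_ ?_ ?_ ?_ ?_)
  · -- integrable F t
    apply Continuous.integrable_of_hasCompactSupport (hcont t)
    exact HasCompactSupport.intro hK (fun x hx => by
      simp [hw0 t x hx])
  · exact (hcont' t).aestronglyMeasurable
  · refine Filter.Eventually.of_forall (fun x => fun σ hσ => ?_)
    by_cases hx : x ∈ K
    · rw [Set.indicator_of_mem hx]
      have hσ' : σ ∈ Set.Icc (t-1) (t+1) := by
        rw [Real.ball_eq_Ioo] at hσ
        exact ⟨le_of_lt hσ.1, le_of_lt hσ.2⟩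
      exact hC (σ, x) ⟨hσ', hx⟩
    · rw [Set.indicator_of_notMem hx]
      simp [hw0 σ x hx]
  · exact ((integrableOn_const hK.measure_lt_top.ne).integrable_indicator
      hK.measurableSet)
  · refine Filter.Eventually.of_forall (fun x => fun σ _ => ?_)
    exact hasDerivAt_normSq' (hasDerivAt_slice w hw σ x)

lemma integral_sum_pdR_eq_zero (G : Fin 4 → V → ℝ) (hG : ∀ j, ContDiff ℝ (⊤ : ℕ∞) (G j))
    (K : Set V) (hK : IsCompact K) (hsupp : ∀ j x, x ∉ K → G j x = 0) :
    ∫ x, ∑ j, pdR j (G j) x = 0 := by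
  obtain ⟨R, hR0, hKR⟩ : ∃ R, 0 < R ∧ K ⊆ Metric.ball 0 R := by
    obtain ⟨r, hr⟩ := hK.isBounded.subset_ball 0
    exact ⟨max r 1, lt_of_lt_of_le one_pos (le_max_right _ _),
      hr.trans (Metric.ball_subset_ball (le_max_left _ _))⟩
  set a : V := fun _ => -R with ha
  set b : V := fun _ => R with hb
  have hle : a ≤ b := fun i => by simp [ha, hb]; linarith
  -- points outside K
  have hKx : ∀ x : V, x ∉ K → ∀ j, fderiv ℝ (G j) x = 0 := by
    intro x hx j
    have hev : G j =ᶠ[nhds x] (fun _ => (0:ℝ)) :=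
      Filter.eventuallyEq_of_mem (hK.isClosed.isOpen_compl.mem_nhds hx)
        (fun y hy => hsupp j y hy)
    rw [hev.fderiv_eq, fderiv_fun_const]; rfl
  have hdiv := MeasureTheory.integral_divergence_of_hasFDerivAt_off_countable' (n := 3)
    a b hle G (fun i x => fderiv ℝ (G i) x) ∅ Set.countable_empty
    (fun i => (hG i).continuous.continuousOn)
    (fun x _ i => (((hG i).differentiable (by simp)) x).hasFDerivAt)
    (((continuous_finset_sum _ (fun i _ => (contDiff_pdR (hG i) i).continuous)).continuousOn).integrableOn_compact isCompact_Icc)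
  -- faces vanish
  have hface : ∀ (i : Fin 4) (c : ℝ), |c| = R → ∀ x : Fin 3 → ℝ, G i ((Fin.insertNth (α := fun _ => ℝ) i c x : V)) = 0 := by
    intro i c hc x
    apply hsupp
    intro hmem
    have h1 : dist ((Fin.insertNth (α := fun _ => ℝ) i c x : V)) 0 < R := Metric.mem_ball.1 (hKR hmem)
    have h2 : R ≤ ‖(Fin.insertNth (α := fun _ => ℝ) i c x : V)‖ := by
      have := norm_le_pi_norm ((Fin.insertNth (α := fun _ => ℝ) i c x : V)) i
      simpa [Fin.insertNth_apply_same, hc] using this.trans_eq' (by simp [Fin.insertNth_apply_same, Real.norm_eq_abs, hc])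
    rw [dist_zero_right] at h1
    linarith
  have hRHS : (∑ i : Fin 4, ((∫ x in Set.Icc (a ∘ i.succAbove) (b ∘ i.succAbove), G i (Fin.insertNth (α := fun _ => ℝ) i (b i) x)) -
      ∫ x in Set.Icc (a ∘ i.succAbove) (b ∘ i.succAbove), G i (Fin.insertNth (α := fun _ => ℝ) i (a i) x))) = 0 := by
    apply Finset.sum_eq_zero
    intro i _
    have e1 : ∀ x : Fin 3 → ℝ, G i (Fin.insertNth (α := fun _ => ℝ) i (b i) x) = 0 := fun x => hface i R (abs_of_pos hR0) x
    have e2 : ∀ x : Fin 3 → ℝ, G i (Fin.insertNth (α := fun _ => ℝ) i (a i) x) = 0 := fun x => hface i (-R) (by rw [abs_neg, abs_of_pos hR0]) x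
    simp [e1, e2]
  -- ball ⊆ Icc
  have hballIcc : Metric.ball (0:V) R ⊆ Set.Icc a b := by
    intro x hx
    rw [Metric.mem_ball, dist_zero_right] at hx
    constructor <;> intro i <;>
      [skip; skip] <;>
    · have := norm_le_pi_norm x i
      rw [Real.norm_eq_abs] at this
      have : |x i| < R := lt_of_le_of_lt this hx
      rw [abs_lt] at this
      simp [ha, hb]
      linarith [this.1, this.2]
  have hLHS : (∫ x in Set.Icc a b, ∑ i : Fin 4, fderiv ℝ (G i) x (Pi.single i 1)) =
      ∫ x, ∑ j, pdR j (G j) x := by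
    apply MeasureTheory.setIntegral_eq_integral_of_forall_compl_eq_zero
    intro x hx
    have hxK : x ∉ K := fun h => hx (hballIcc (hKR h))
    apply Finset.sum_eq_zero
    intro i _
    rw [hKx x hxK i]; rfl
  rw [← hLHS, hdiv, hRHS]

def Enq (f g : V → ℂ) : ℝ := Kq f g - 2 * Pq f g

/-- Mass conservation for the rescaled system with purely imaginary `W = iΦ`, `W̃ = 2W`,
`Φ = Σ_k φ_k B_k` real-valued: `M(y(t),z(t)) = ‖y(t)‖² + 2‖z(t)‖²` is constant in time. -/
theorem mass_conservation_rescaled {N : ℕ} (φk : Fin N → V → ℝ) (B : Fin N → ℝ → ℝ)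
    (hφ : ∀ k, ContDiff ℝ (⊤ : ℕ∞) (φk k))
    (hbd : ∀ k n, ∃ C : ℝ, ∀ x, ‖iteratedFDeriv ℝ n (φk k) x‖ ≤ C)
    (Φ : ℝ → V → ℝ) (hΦ : ∀ t ξ, Φ t ξ = ∑ k, φk k ξ * B k t)
    (y z : ℝ → V → ℂ)
    (hysm : ContDiff ℝ (⊤ : ℕ∞) (fun p : ℝ × V => y p.1 p.2))
    (hzsm : ContDiff ℝ (⊤ : ℕ∞) (fun p : ℝ × V => z p.1 p.2))
    (hdecay : ∃ K : Set V, IsCompact K ∧ ∀ t,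
      Function.support (y t) ⊆ K ∧ Function.support (z t) ⊆ K)
    (heqy : ∀ t ξ, deriv (fun s => y s ξ) t =
      Complex.I * (lap (y t) ξ + (∑ j, (2 * Complex.I * (pdR j (Φ t) ξ : ℂ)) * pd j (y t) ξ)
        + ((∑ j, (Complex.I * (pdR j (Φ t) ξ : ℂ)) ^ 2) + Complex.I * (lapR (Φ t) ξ : ℂ)) * y t ξ)
      + 2 * Complex.I * z t ξ * (starRingEnd ℂ) (y t ξ))
    (heqz : ∀ t ξ, deriv (fun s => z s ξ) t =
      Complex.I * ((1 / 2) * lap (z t) ξ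
        + (∑ j, (2 * Complex.I * (pdR j (Φ t) ξ : ℂ)) * pd j (z t) ξ)
        + ((1 / 2) * (∑ j, (2 * Complex.I * (pdR j (Φ t) ξ : ℂ)) ^ 2)
            + Complex.I * (lapR (Φ t) ξ : ℂ)) * z t ξ)
      + Complex.I * (y t ξ) ^ 2) :
    ∀ s t : ℝ, Mq (y s) (z s) = Mq (y t) (z t) := by
  obtain ⟨K, hK, hsup⟩ := hdecay
  have hM : ∀ τ : ℝ, HasDerivAt (fun σ => Mq (y σ) (z σ)) 0 τ := by
    intro τ
    have hYc : ContDiff ℝ (⊤ : ℕ∞) (y τ) := hysm.comp (contDiff_const.prodMk contDiff_id)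
    have hZc : ContDiff ℝ (⊤ : ℕ∞) (z τ) := hzsm.comp (contDiff_const.prodMk contDiff_id)
    have hPc : ContDiff ℝ (⊤ : ℕ∞) (Φ τ) := by
      have hfe : Φ τ = fun ξ => ∑ k, φk k ξ * B k τ := funext (hΦ τ)
      rw [hfe]
      exact ContDiff.sum (fun k _ => (hφ k).mul contDiff_const)
    have hHcc : ∀ j : Fin 4, ContDiff ℝ (⊤ : ℕ∞) (fun x : V =>
        2*I*((starRingEnd ℂ) (y τ x) * pd j (y τ) x)
        - 2*(((pdR j (Φ τ) x : ℝ):ℂ) * ((starRingEnd ℂ) (y τ x) * y τ x))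
        + (2*I*((starRingEnd ℂ) (z τ x) * pd j (z τ) x)
        - 4*(((pdR j (Φ τ) x : ℝ):ℂ) * ((starRingEnd ℂ) (z τ x) * z τ x)))) := by
      intro j
      have hYs : ContDiff ℝ (⊤ : ℕ∞) (fun x => (starRingEnd ℂ) (y τ x)) :=
        Complex.conjCLE.toContinuousLinearMap.contDiff.comp hYc
      have hZs : ContDiff ℝ (⊤ : ℕ∞) (fun x => (starRingEnd ℂ) (z τ x)) :=
        Complex.conjCLE.toContinuousLinearMap.contDiff.comp hZc
      have hPo : ContDiff ℝ (⊤ : ℕ∞) (fun x => ((pdR j (Φ τ) x : ℝ):ℂ)) :=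
        Complex.ofRealCLM.contDiff.comp (contDiff_pdR hPc j)
      exact ((contDiff_const.mul (hYs.mul (contDiff_pd hYc j))).sub
          (contDiff_const.mul (hPo.mul (hYs.mul hYc)))).add
        ((contDiff_const.mul (hZs.mul (contDiff_pd hZc j))).sub
          (contDiff_const.mul (hPo.mul (hZs.mul hZc))))
    have hy0 : ∀ x, x ∉ K → y τ x = 0 := fun x hx =>
      Function.notMem_support.1 (fun h => hx ((hsup τ).1 h))
    have hz0 : ∀ x, x ∉ K → z τ x = 0 := fun x hx =>
      Function.notMem_support.1 (fun h => hx ((hsup τ).2 h))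
    have hdiv := integral_sum_pdR_eq_zero
      (fun j x => (2*I*((starRingEnd ℂ) (y τ x) * pd j (y τ) x)
        - 2*(((pdR j (Φ τ) x : ℝ):ℂ) * ((starRingEnd ℂ) (y τ x) * y τ x))
        + (2*I*((starRingEnd ℂ) (z τ x) * pd j (z τ) x)
        - 4*(((pdR j (Φ τ) x : ℝ):ℂ) * ((starRingEnd ℂ) (z τ x) * z τ x)))).re)
      (fun j => Complex.reCLM.contDiff.comp (hHcc j)) K hK
      (fun j x hx => by simp [hy0 x hx, hz0 x hx])
    beta_reduce at hdiv
    obtain ⟨hyint, hym⟩ := hasDerivAt_mass y hysm K hK (fun σ => (hsup σ).1) τ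
    obtain ⟨hzint, hzm⟩ := hasDerivAt_mass z hzsm K hK (fun σ => (hsup σ).2) τ
    have hMd : HasDerivAt (fun σ => Mq (y σ) (z σ))
        ((∫ x, 2 * ((starRingEnd ℂ) (y τ x) *
            fderiv ℝ (fun p : ℝ × V => y p.1 p.2) (τ, x) ((1:ℝ), (0:V))).re)
          + 2 * ∫ x, 2 * ((starRingEnd ℂ) (z τ x) *
            fderiv ℝ (fun p : ℝ × V => z p.1 p.2) (τ, x) ((1:ℝ), (0:V))).re) τ := by
      show HasDerivAt (fun σ => (∫ x, ‖y σ x‖ ^ 2) + 2 * ∫ x, ‖z σ x‖ ^ 2) _ τ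
      exact hym.add (hzm.const_mul 2)
    have hpt : ∀ x : V,
        2 * ((starRingEnd ℂ) (y τ x) *
            fderiv ℝ (fun p : ℝ × V => y p.1 p.2) (τ, x) ((1:ℝ), (0:V))).re
          + 2 * (2 * ((starRingEnd ℂ) (z τ x) *
            fderiv ℝ (fun p : ℝ × V => z p.1 p.2) (τ, x) ((1:ℝ), (0:V))).re)
        = ∑ j, pdR j (fun x' =>
            (2*I*((starRingEnd ℂ) (y τ x') * pd j (y τ) x')
            - 2*(((pdR j (Φ τ) x' : ℝ):ℂ) * ((starRingEnd ℂ) (y τ x') * y τ x'))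
            + (2*I*((starRingEnd ℂ) (z τ x') * pd j (z τ) x')
            - 4*(((pdR j (Φ τ) x' : ℝ):ℂ) * ((starRingEnd ℂ) (z τ x') * z τ x')))).re) x := by
      intro x
      have hdy : fderiv ℝ (fun p : ℝ × V => y p.1 p.2) (τ, x) ((1:ℝ), (0:V))
          = deriv (fun σ => y σ x) τ := ((hasDerivAt_slice y hysm τ x).deriv).symm
      have hdz : fderiv ℝ (fun p : ℝ × V => z p.1 p.2) (τ, x) ((1:ℝ), (0:V))
          = deriv (fun σ => z σ x) τ := ((hasDerivAt_slice z hzsm τ x).deriv).symm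
      have hsum : (∑ j, pdR j (fun x' =>
            (2*I*((starRingEnd ℂ) (y τ x') * pd j (y τ) x')
            - 2*(((pdR j (Φ τ) x' : ℝ):ℂ) * ((starRingEnd ℂ) (y τ x') * y τ x'))
            + (2*I*((starRingEnd ℂ) (z τ x') * pd j (z τ) x')
            - 4*(((pdR j (Φ τ) x' : ℝ):ℂ) * ((starRingEnd ℂ) (z τ x') * z τ x')))).re) x)
          = ∑ j : Fin 4,
            (2*I*((starRingEnd ℂ) (pd j (y τ) x) * pd j (y τ) x
                + (starRingEnd ℂ) (y τ x) * pd j (pd j (y τ)) x)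
            - 2*(((pdR j (pdR j (Φ τ)) x : ℝ):ℂ) * ((starRingEnd ℂ) (y τ x) * y τ x))
            - 2*(((pdR j (Φ τ) x : ℝ):ℂ) * ((starRingEnd ℂ) (pd j (y τ) x) * y τ x
                + (starRingEnd ℂ) (y τ x) * pd j (y τ) x))
            + (2*I*((starRingEnd ℂ) (pd j (z τ) x) * pd j (z τ) x
                + (starRingEnd ℂ) (z τ x) * pd j (pd j (z τ)) x)
            - 4*(((pdR j (pdR j (Φ τ)) x : ℝ):ℂ) * ((starRingEnd ℂ) (z τ x) * z τ x))
            - 4*(((pdR j (Φ τ) x : ℝ):ℂ) * ((starRingEnd ℂ) (pd j (z τ) x) * z τ x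
                + (starRingEnd ℂ) (z τ x) * pd j (z τ) x)))).re := by
        refine Finset.sum_congr rfl (fun j _ => ?_)
        rw [pdR_re (((hHcc j).differentiable (by simp)) x) j, pd_Hc hYc hZc hPc j x]
      rw [hdy, heqy τ x, hdz, heqz τ x, hsum]
      simp only [lap, lapR, Complex.ofReal_sum, Fin.sum_univ_four]
      simp [Complex.mul_re, Complex.mul_im, Complex.add_re, Complex.add_im, Complex.sub_re,
        Complex.sub_im, Complex.I_re, Complex.I_im, Complex.ofReal_re, Complex.ofReal_im,
        Complex.conj_re, Complex.conj_im, pow_two, Complex.div_re, Complex.div_im,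
        Complex.normSq_apply]
      ring
    have h0 : (∫ x, 2 * ((starRingEnd ℂ) (y τ x) *
            fderiv ℝ (fun p : ℝ × V => y p.1 p.2) (τ, x) ((1:ℝ), (0:V))).re)
          + 2 * ∫ x, 2 * ((starRingEnd ℂ) (z τ x) *
            fderiv ℝ (fun p : ℝ × V => z p.1 p.2) (τ, x) ((1:ℝ), (0:V))).re = 0 := by
      rw [← MeasureTheory.integral_const_mul, ← MeasureTheory.integral_add hyint
        (hzint.const_mul 2)]
      rw [MeasureTheory.integral_congr_ae (Filter.Eventually.of_forall hpt)]
      exact hdiv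
    rw [h0] at hMd
    exact hMd
  intro s t
  exact is_const_of_deriv_eq_zero (fun τ => (hM τ).differentiableAt)
    (fun τ => (hM τ).deriv) s t
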